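/- For the 5-qubit perfect code, the reduced density matrix of any codeword on any single qubit is maximally mixed: for every unit vector |c⟩ in the codespace and every qubit position i ∈ {1,…,5}, Tr_{[5]∖{i}}(|c⟩⟨c|) = Id/2. -/

import Mathlib

open Matrix

/-- The Pauli X matrix. -/
noncomputable def pX : Matrix (Fin 2) (Fin 2) ℂ := !![0, 1; 1, 0]
/-- The Pauli Z matrix. -/
noncomputable def pZ : Matrix (Fin 2) (Fin 2) ℂ := !![1, 0; 0, -1]

/-- Tensor product of five single-qubit operators, as a matrix on `(C²)^{⊗5}`. -/
noncomputable def tp5 (f : Fin 5 → Matrix (Fin 2) (Fin 2) ℂ) :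
    Matrix (Fin 5 → Fin 2) (Fin 5 → Fin 2) ℂ :=
  fun x y => ∏ i, f i (x i) (y i)

/-- The four stabilizer generators XZZXI, IXZZX, XIXZZ, ZXIXZ of the 5-qubit code. -/
noncomputable def stabGen : Fin 4 → Matrix (Fin 5 → Fin 2) (Fin 5 → Fin 2) ℂ :=
  ![tp5 ![pX, pZ, pZ, pX, 1], tp5 ![1, pX, pZ, pZ, pX],
    tp5 ![pX, 1, pX, pZ, pZ], tp5 ![pZ, pX, 1, pX, pZ]]

/-- The element of the stabilizer group indexed by a subset of the generators. -/
noncomputable def stabElem (s : Fin 4 → Bool) : Matrix (Fin 5 → Fin 2) (Fin 5 → Fin 2) ℂ :=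
  (if s 0 then stabGen 0 else 1) * (if s 1 then stabGen 1 else 1) *
    (if s 2 then stabGen 2 else 1) * (if s 3 then stabGen 3 else 1)

/-- The projector `Π = (1/16) Σ_{g ∈ stabilizer group} g` onto the codespace. -/
noncomputable def codeProj : Matrix (Fin 5 → Fin 2) (Fin 5 → Fin 2) ℂ :=
  (1 / 16 : ℂ) • ∑ s : Fin 4 → Bool, stabElem s

/-- The reduced density matrix on qubit `i` of the pure state `|c⟩⟨c|`, i.e. the
partial trace over the four qubits other than `i`. -/
noncomputable def reducedDensity (c : (Fin 5 → Fin 2) → ℂ) (i : Fin 5) :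
    Matrix (Fin 2) (Fin 2) ℂ :=
  fun a b => ∑ x : Fin 5 → Fin 2,
    if x i = 0 then c (Function.update x i a) * star (c (Function.update x i b)) else 0

/-!
Every stabilizer generator `g` is a Hermitian Pauli string fixing the code space: the generators
commute and square to `1`, so multiplying by `g` permutes the terms of `Π`, whence `g Π = Π`.
Hence `⟨c|N|c⟩ = ⟨c|g N g|c⟩` for every operator `N`. The entry `ρ_{ab}` of the reduced density
matrix on qubit `i` is `⟨c|(|b⟩⟨a|)_i|c⟩`, and every qubit carries a `Z` in some generator and an
`X` in another. Conjugating `|b⟩⟨a|` by `Z` flips its sign when `a ≠ b`, so the off-diagonal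
entries vanish; conjugating `|0⟩⟨0|` by `X` gives `|1⟩⟨1|`, so the diagonal entries agree.
Since `tr ρ = ‖c‖² = 1`, `ρ = Id/2`.
-/

open Finset Function

lemma star_dotProduct_conj_mulVec {n R : Type*} [Fintype n] [NonUnitalSemiring R] [StarRing R]
    {A : Matrix n n R} {c : n → R} (hA : A.IsHermitian) (hc : A *ᵥ c = c) (N : Matrix n n R) :
    star c ⬝ᵥ (A * N * A) *ᵥ c = star c ⬝ᵥ N *ᵥ c := by
  have hstar : star c ᵥ* A = star c := by
    rw [← hA.eq, ← star_mulVec, hc]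
  rw [← mulVec_mulVec, hc, ← mulVec_mulVec, dotProduct_mulVec, hstar]

lemma sum_ite_apply_eq_comp_update {ι α M : Type*} [Fintype ι] [DecidableEq ι] [Fintype α]
    [DecidableEq α] [AddCommMonoid M] (i : ι) (a b : α) (F : (ι → α) → M) :
    ∑ x : ι → α, (if x i = a then F (update x i b) else 0) =
      ∑ x : ι → α, if x i = b then F x else 0 := by
  rw [← sum_filter, ← sum_filter]
  refine sum_nbij' (update · i b) (update · i a) (by simp) (by simp) ?_ ?_ (fun _ _ => rfl)
  · intro x hx
    simp_all
  · intro x hx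
    simp_all

lemma mul_ite_self {M : Type*} [MulOneClass M] {g : M} (hg : g * g = 1) (b : Bool) :
    g * (if b then g else 1) = if !b then g else 1 := by
  cases b <;> simp [hg]

lemma Matrix.eq_half_smul_one_of_fin_two {K : Type*} [Field K] {A : Matrix (Fin 2) (Fin 2) K}
    (h01 : A 0 1 = 0) (h10 : A 1 0 = 0) (hdiag : A 0 0 = A 1 1) (htr : A.trace = 1) :
    A = (1 / 2 : K) • 1 := by
  have h00 : A 0 0 = 1 / 2 := by
    rw [trace_fin_two, ← hdiag, ← two_mul] at htr
    exact eq_one_div_of_mul_eq_one_right htr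
  ext x y
  fin_cases x <;> fin_cases y <;> simp [h00, h01, h10, ← hdiag]

-- `Y` never occurs in the generators of the five-qubit code.
inductive Pauli
  | I | X | Z
  deriving DecidableEq

namespace Pauli

noncomputable def toMatrix : Pauli → Matrix (Fin 2) (Fin 2) ℂ
  | I => 1
  | X => pX
  | Z => pZ

def anticommutes : Pauli → Pauli → Bool
  | X, Z | Z, X => true
  | _, _ => false

lemma toMatrix_mul_self (p : Pauli) : p.toMatrix * p.toMatrix = 1 := by
  cases p <;> simp [toMatrix, pX, pZ, ← Matrix.one_fin_two]

lemma isHermitian_toMatrix (p : Pauli) : p.toMatrix.IsHermitian := by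
  cases p <;> simp [toMatrix, pX, pZ, Matrix.IsHermitian, ← Matrix.ext_iff, Fin.forall_fin_two]

lemma toMatrix_mul_comm (p q : Pauli) :
    p.toMatrix * q.toMatrix = (if p.anticommutes q then -1 else 1) • (q.toMatrix * p.toMatrix) := by
  cases p <;> cases q <;> simp [toMatrix, anticommutes, pX, pZ]

end Pauli

lemma tp5_mul (f g : Fin 5 → Matrix (Fin 2) (Fin 2) ℂ) :
    tp5 f * tp5 g = tp5 (f * g) := by
  ext x y
  simp only [tp5, mul_apply, Pi.mul_apply, ← prod_mul_distrib, prod_univ_sum, Fintype.piFinset_univ]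

lemma tp5_one : tp5 1 = 1 := by
  ext x y
  by_cases h : x = y
  · subst h
    simp [tp5]
  · obtain ⟨j, hj⟩ := ne_iff.mp h
    rw [one_apply_ne h]
    exact prod_eq_zero (mem_univ j) (by simp [hj])

lemma tp5_smul (a : Fin 5 → ℂ) (f : Fin 5 → Matrix (Fin 2) (Fin 2) ℂ) :
    tp5 (a • f) = (∏ j, a j) • tp5 f := by
  ext x y
  simp [tp5, prod_mul_distrib]

lemma isHermitian_tp5 {f : Fin 5 → Matrix (Fin 2) (Fin 2) ℂ} (hf : ∀ j, (f j).IsHermitian) :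
    (tp5 f).IsHermitian := by
  ext x y
  simp only [tp5, conjTranspose_apply, star_prod]
  exact prod_congr rfl fun j _ => (hf j).apply _ _

noncomputable def pauliString (s : Fin 5 → Pauli) : Matrix (Fin 5 → Fin 2) (Fin 5 → Fin 2) ℂ :=
  tp5 fun j => (s j).toMatrix

lemma pauliString_mul_self (s : Fin 5 → Pauli) : pauliString s * pauliString s = 1 := by
  rw [pauliString, tp5_mul, ← tp5_one]
  exact congrArg tp5 (funext fun j => (s j).toMatrix_mul_self)

lemma isHermitian_pauliString (s : Fin 5 → Pauli) : (pauliString s).IsHermitian :=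
  isHermitian_tp5 fun j => (s j).isHermitian_toMatrix

lemma pauliString_commute {s t : Fin 5 → Pauli}
    (h : Even #{j | (s j).anticommutes (t j)}) : Commute (pauliString s) (pauliString t) := by
  have hsign : ∏ j, (if (s j).anticommutes (t j) then -1 else 1 : ℂ) = 1 := by
    rw [prod_ite, prod_const, prod_const_one, mul_one, h.neg_one_pow]
  have hmul : (fun j => (s j).toMatrix) * (fun j => (t j).toMatrix) =
      (fun j => if (s j).anticommutes (t j) then -1 else 1 : Fin 5 → ℂ) •
        ((fun j => (t j).toMatrix) * fun j => (s j).toMatrix) :=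
    funext fun j => by simpa using (s j).toMatrix_mul_comm (t j)
  unfold Commute SemiconjBy pauliString
  rw [tp5_mul, tp5_mul, hmul, tp5_smul, hsign, one_smul]

open Pauli in
def fiveQubitStabilizer : Fin 4 → Fin 5 → Pauli :=
  ![![X, Z, Z, X, I], ![I, X, Z, Z, X], ![X, I, X, Z, Z], ![Z, X, I, X, Z]]

lemma stabGen_eq_pauliString (k : Fin 4) : stabGen k = pauliString (fiveQubitStabilizer k) := by
  fin_cases k <;> exact congrArg tp5 (funext fun j => by fin_cases j <;> rfl)

-- Any two of the generators anticommute on exactly two qubits.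
lemma stabGen_commute (j k : Fin 4) : Commute (stabGen j) (stabGen k) := by
  rw [stabGen_eq_pauliString, stabGen_eq_pauliString]
  exact pauliString_commute (by revert j k; decide)

lemma stabGen_mul_self (k : Fin 4) : stabGen k * stabGen k = 1 := by
  rw [stabGen_eq_pauliString]
  exact pauliString_mul_self _

lemma isHermitian_stabGen (k : Fin 4) : (stabGen k).IsHermitian := by
  rw [stabGen_eq_pauliString]
  exact isHermitian_pauliString _

lemma stabGen_mul_stabElem (k : Fin 4) (s : Fin 4 → Bool) :
    stabGen k * stabElem s = stabElem (update s k (!s k)) := by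
  have hc (j : Fin 4) (b : Bool) : Commute (stabGen k) (if b then stabGen j else 1) := by
    cases b <;> simp [stabGen_commute k j]
  have hsq := mul_ite_self (stabGen_mul_self k)
  simp only [stabElem, update_apply, mul_assoc]
  fin_cases k <;>
    simp only [Fin.zero_eta, Fin.mk_one, Fin.reduceFinMk, Fin.reduceEq, ↓reduceIte] at hc hsq ⊢
  · rw [← mul_assoc (stabGen 0), hsq]
  · rw [(hc 0 _).left_comm, ← mul_assoc (stabGen 1), hsq]
  · rw [(hc 0 _).left_comm, (hc 1 _).left_comm, ← mul_assoc (stabGen 2), hsq]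
  · rw [(hc 0 _).left_comm, (hc 1 _).left_comm, (hc 2 _).left_comm, hsq]

lemma stabGen_mul_codeProj (k : Fin 4) : stabGen k * codeProj = codeProj := by
  have hflip : Involutive fun s : Fin 4 → Bool => update s k (!s k) := by
    intro s
    simp
  rw [codeProj, Matrix.mul_smul, mul_sum]
  simp only [stabGen_mul_stabElem]
  exact congrArg _ (Equiv.sum_comp hflip.toPerm stabElem)

lemma stabGen_mulVec_of_codeProj_mulVec {c : (Fin 5 → Fin 2) → ℂ} (hc : codeProj *ᵥ c = c)
    (k : Fin 4) : stabGen k *ᵥ c = c := by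
  rw [← hc, mulVec_mulVec, stabGen_mul_codeProj]

noncomputable def onQubit (i : Fin 5) (M : Matrix (Fin 2) (Fin 2) ℂ) :
    Matrix (Fin 5 → Fin 2) (Fin 5 → Fin 2) ℂ :=
  tp5 (update 1 i M)

lemma pauliString_mul_onQubit_mul_pauliString (s : Fin 5 → Pauli) (i : Fin 5)
    (M : Matrix (Fin 2) (Fin 2) ℂ) :
    pauliString s * onQubit i M * pauliString s =
      onQubit i ((s i).toMatrix * M * (s i).toMatrix) := by
  rw [pauliString, onQubit, onQubit, tp5_mul, tp5_mul]
  congr 1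
  ext1 j
  by_cases hj : j = i
  · subst hj
    simp
  · simp [update_of_ne hj, (s j).toMatrix_mul_self]

lemma onQubit_smul (i : Fin 5) (a : ℂ) (M : Matrix (Fin 2) (Fin 2) ℂ) :
    onQubit i (a • M) = a • onQubit i M := by
  have h : update (1 : Fin 5 → Matrix (Fin 2) (Fin 2) ℂ) i (a • M) =
      update (1 : Fin 5 → ℂ) i a • update (1 : Fin 5 → Matrix (Fin 2) (Fin 2) ℂ) i M := by
    ext1 j
    by_cases hj : j = i
    · subst hj
      simp
    · simp [update_of_ne hj]
  rw [onQubit, onQubit, h, tp5_smul, prod_update_of_mem (mem_univ i)]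
  simp

lemma onQubit_apply_update (i : Fin 5) (M : Matrix (Fin 2) (Fin 2) ℂ) (x : Fin 5 → Fin 2)
    (a : Fin 2) : onQubit i M x (update x i a) = M (x i) a := by
  rw [onQubit, tp5, prod_eq_single i]
  · simp
  · intro j _ hj
    simp [update_of_ne hj]
  · simp

lemma onQubit_apply_eq_zero (i : Fin 5) (M : Matrix (Fin 2) (Fin 2) ℂ) {x y : Fin 5 → Fin 2}
    (hy : y ∉ Set.range (update x i)) : onQubit i M x y = 0 := by
  obtain ⟨j, hj⟩ : ∃ j, y j ≠ update x i (y i) j := by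
    by_contra! h
    exact hy ⟨y i, (funext h).symm⟩
  have hji : j ≠ i := by
    rintro rfl
    simp at hj
  rw [update_of_ne hji] at hj
  unfold onQubit tp5
  exact prod_eq_zero (mem_univ j) (by rw [update_of_ne hji, Pi.one_apply, one_apply_ne hj.symm])

lemma onQubit_mulVec_apply (i : Fin 5) (M : Matrix (Fin 2) (Fin 2) ℂ) (c : (Fin 5 → Fin 2) → ℂ)
    (x : Fin 5 → Fin 2) : (onQubit i M *ᵥ c) x = ∑ a, M (x i) a * c (update x i a) := by
  rw [mulVec, dotProduct]
  symm
  refine sum_of_injOn (update x i) (update_injective x i).injOn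
    (fun _ _ => mem_univ _) ?_ ?_
  · intro y _ hy
    rw [onQubit_apply_eq_zero i M (by simpa using hy), zero_mul]
  · intro a _
    rw [onQubit_apply_update]

lemma reducedDensity_apply (c : (Fin 5 → Fin 2) → ℂ) (i : Fin 5) (a b : Fin 2) :
    reducedDensity c i a b = ∑ x, if x i = b then c (update x i a) * star (c x) else 0 := by
  rw [← sum_ite_apply_eq_comp_update i 0 b]
  simp [reducedDensity]

lemma reducedDensity_apply_eq_star_dotProduct (c : (Fin 5 → Fin 2) → ℂ) (i : Fin 5) (a b : Fin 2) :
    reducedDensity c i a b = star c ⬝ᵥ onQubit i (single b a 1) *ᵥ c := by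
  rw [reducedDensity_apply, dotProduct]
  refine sum_congr rfl fun x _ => ?_
  rw [onQubit_mulVec_apply]
  by_cases hb : x i = b
  · simp [hb, single_apply, mul_comm]
  · simp [hb, Ne.symm hb]

lemma trace_reducedDensity (c : (Fin 5 → Fin 2) → ℂ) (i : Fin 5) :
    (reducedDensity c i).trace = ∑ x, c x * star (c x) := by
  simp only [trace, Matrix.diag, reducedDensity_apply]
  rw [sum_comm]
  simp

lemma pZ_mul_single_mul_pZ {a b : Fin 2} (hab : a ≠ b) :
    pZ * single b a 1 * pZ = (-1 : ℂ) • single b a 1 := by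
  ext x y
  fin_cases a <;> fin_cases b <;> fin_cases x <;> fin_cases y <;>
    simp_all [pZ, vecMul, dotProduct, Fin.sum_univ_two]

lemma pX_mul_single_mul_pX : pX * single 0 0 1 * pX = single 1 1 (1 : ℂ) := by
  ext x y
  fin_cases x <;> fin_cases y <;> simp [pX, vecMul, dotProduct, Fin.sum_univ_two]

lemma exists_fiveQubitStabilizer_apply_eq (i : Fin 5) {p : Pauli} (hp : p = .X ∨ p = .Z) :
    ∃ k, fiveQubitStabilizer k i = p := by
  rcases hp with rfl | rfl <;> revert i <;> decide

section CodeState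

variable {c : (Fin 5 → Fin 2) → ℂ}

lemma star_dotProduct_onQubit_conj (hc : codeProj *ᵥ c = c) (k : Fin 4) (i : Fin 5)
    (M : Matrix (Fin 2) (Fin 2) ℂ) :
    star c ⬝ᵥ onQubit i ((fiveQubitStabilizer k i).toMatrix * M *
      (fiveQubitStabilizer k i).toMatrix) *ᵥ c = star c ⬝ᵥ onQubit i M *ᵥ c := by
  rw [← pauliString_mul_onQubit_mul_pauliString, ← stabGen_eq_pauliString]
  exact star_dotProduct_conj_mulVec (isHermitian_stabGen k)
    (stabGen_mulVec_of_codeProj_mulVec hc k) _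

lemma reducedDensity_apply_of_ne (hc : codeProj *ᵥ c = c) (i : Fin 5) {a b : Fin 2}
    (hab : a ≠ b) : reducedDensity c i a b = 0 := by
  obtain ⟨k, hk⟩ := exists_fiveQubitStabilizer_apply_eq i (p := .Z) (.inr rfl)
  have h := star_dotProduct_onQubit_conj hc k i (single b a 1)
  rw [hk, Pauli.toMatrix, pZ_mul_single_mul_pZ hab, onQubit_smul, smul_mulVec, dotProduct_smul,
    neg_one_smul, ← reducedDensity_apply_eq_star_dotProduct] at h
  exact CharZero.neg_eq_self_iff.mp h

lemma reducedDensity_apply_zero_zero_eq (hc : codeProj *ᵥ c = c) (i : Fin 5) :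
    reducedDensity c i 0 0 = reducedDensity c i 1 1 := by
  obtain ⟨k, hk⟩ := exists_fiveQubitStabilizer_apply_eq i (p := .X) (.inl rfl)
  have h := star_dotProduct_onQubit_conj hc k i (single 0 0 1)
  rw [hk, Pauli.toMatrix, pX_mul_single_mul_pX] at h
  rw [reducedDensity_apply_eq_star_dotProduct, reducedDensity_apply_eq_star_dotProduct, h]

end CodeState

/-- For the 5-qubit perfect code, the reduced density matrix of any
codeword on any single qubit is maximally mixed: `Tr_{[5]∖{i}}(|c⟩⟨c|) = Id/2`. -/
theorem five_qubit_code_reduced_density_maximally_mixed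
    (c : (Fin 5 → Fin 2) → ℂ)
    (hc : codeProj.mulVec c = c)
    (hunit : ∑ x, ‖c x‖ ^ 2 = 1)
    (i : Fin 5) :
    reducedDensity c i = (1 / 2 : ℂ) • (1 : Matrix (Fin 2) (Fin 2) ℂ) := by
  have htr : (reducedDensity c i).trace = 1 := by
    rw [trace_reducedDensity]
    simp_rw [Complex.star_def, Complex.mul_conj']
    exact_mod_cast hunit
  exact eq_half_smul_one_of_fin_two (reducedDensity_apply_of_ne hc i (by decide))
    (reducedDensity_apply_of_ne hc i (by decide)) (reducedDensity_apply_zero_zero_eq hc i) htr
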